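/- arXiv:2002.11395 — 2 statements merged into one kernel-verified Lean document; each statement's English description precedes it below -/
import Mathlib

section
/- If f : [0,∞) → [0,∞) is measurable with Laplace transform (ℒf)(λ) = λ^{-1} exp(-θ λ^{α}) for all λ > 0 (θ > 0, α ∈ (0,1)), then the Cesàro mean M_t(f) = (1/t)∫₀^t f(s) ds satisfies M_t(f) ~ exp(-θ t^{-α}) as t → ∞; in particular M_t(f) → 1 as t → ∞. -/
open Real Filter MeasureTheory Set

/- ## Auxiliary algebraic lemmas -/

lemma aux_bin (n : ℕ) (x : ℝ) :
    (1 - x)^n = ∑ k ∈ Finset.range (n+1), (-1:ℝ)^k * n.choose k * x^k := by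
  have h := add_pow (-x) 1 n
  simp only [one_pow, mul_one] at h
  rw [show (1:ℝ) - x = -x + 1 by ring, h]
  apply Finset.sum_congr rfl
  intro k _
  rw [neg_pow]
  ring

lemma aux_one_sub_pow (n : ℕ) (x : ℝ) :
    1 - (1 - x)^n = ∑ j ∈ Finset.range n, (-1:ℝ)^j * (n.choose (j+1)) * x^(j+1) := by
  rw [aux_bin, Finset.sum_range_succ']
  simp only [pow_zero, Nat.choose_zero_right, Nat.cast_one, mul_one, one_mul]
  rw [show ∀ (S : ℝ), 1 - (S + 1) = -S by intro S; ring]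
  rw [← Finset.sum_neg_distrib]
  apply Finset.sum_congr rfl
  intro j _
  rw [pow_succ]
  ring

lemma aux_mul_pow (m : ℕ) (x : ℝ) :
    x * (1 - x)^m = ∑ j ∈ Finset.range (m+1), (-1:ℝ)^j * (m.choose j) * x^(j+1) := by
  rw [aux_bin, Finset.mul_sum]
  apply Finset.sum_congr rfl
  intro j _
  rw [pow_succ]
  ring

lemma aux_T (m : ℕ) : ∑ j ∈ Finset.range (m+1), (-1:ℝ)^j * ((m+1).choose (j+1)) = 1 := by
  have h := @Int.alternating_sum_range_choose (m+1)
  rw [if_neg (Nat.succ_ne_zero m)] at h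
  have h2 : ((∑ i ∈ Finset.range (m+2), (-1:ℤ)^i * ((m+1).choose i) : ℤ) : ℝ) = 0 := by
    rw [h]; norm_num
  push_cast at h2
  rw [Finset.sum_range_succ'] at h2
  simp only [pow_zero, Nat.choose_zero_right, Nat.cast_one, one_mul, mul_one] at h2
  have : ∀ j, (-1:ℝ)^(j+1) * ((m+1).choose (j+1)) = -((-1:ℝ)^j * ((m+1).choose (j+1))) := by
    intro j; rw [pow_succ]; ring
  rw [Finset.sum_congr rfl (fun j _ => this j), Finset.sum_neg_distrib] at h2
  linarith

lemma aux_key (m j : ℕ) : ((m.choose j : ℝ)) / (j+1) = ((m+1).choose (j+1) : ℝ) / (m+1) := by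
  have h := Nat.add_one_mul_choose_eq m j
  have h2 : ((m+1) * m.choose j : ℝ) = ((m+1).choose (j+1)) * (j+1) := by
    exact_mod_cast h
  have hj : ((j:ℝ)+1) ≠ 0 := by positivity
  have hm : ((m:ℝ)+1) ≠ 0 := by positivity
  field_simp
  linarith [h2]

lemma aux_P (m : ℕ) : ∑ j ∈ Finset.range (m+1), (-1:ℝ)^j * (m.choose j) / (j+1) = 1/(m+1) := by
  have : ∀ j ∈ Finset.range (m+1), (-1:ℝ)^j * (m.choose j) / (j+1)
      = (1/(m+1)) * ((-1:ℝ)^j * ((m+1).choose (j+1))) := by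
    intro j _
    rw [mul_div_assoc, aux_key m j]
    field_simp
  rw [Finset.sum_congr rfl this, ← Finset.mul_sum, aux_T]
  simp

lemma aux_altH (n : ℕ) : ∑ j ∈ Finset.range n, (-1:ℝ)^j * (n.choose (j+1)) / (j+1)
    = ∑ j ∈ Finset.range n, (1:ℝ)/(j+1) := by
  induction n with
  | zero => simp
  | succ n ih =>
    have pas : ∀ j ∈ Finset.range (n+1), (-1:ℝ)^j * ((n+1).choose (j+1)) / (j+1)
        = (-1:ℝ)^j * (n.choose j) / (j+1) + (-1:ℝ)^j * (n.choose (j+1)) / (j+1) := by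
      intro j _
      rw [Nat.choose_succ_succ]
      push_cast
      ring
    rw [Finset.sum_congr rfl pas, Finset.sum_add_distrib, aux_P,
      Finset.sum_range_succ (fun j => (-1:ℝ)^j * (n.choose (j+1)) / (j+1))]
    rw [Nat.choose_succ_self]
    simp only [Nat.cast_zero, mul_zero, zero_div, add_zero]
    rw [ih, Finset.sum_range_succ]
    ring

lemma aux_exp_lb {x : ℝ} (h0 : 0 ≤ x) (h1 : x ≤ 1/2) : Real.exp (-(2*x)) ≤ 1 - x := by
  have h2 : 1 + 2*x ≤ Real.exp (2*x) := by linarith [Real.add_one_le_exp (2*x)]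
  have h3 : (0:ℝ) < 1 + 2*x := by linarith
  rw [show -(2*x) = -(2*x) by rfl, Real.exp_neg]
  have h5 : (Real.exp (2*x))⁻¹ ≤ (1+2*x)⁻¹ := inv_anti₀ h3 h2
  refine h5.trans ?_
  rw [inv_le_iff_one_le_mul₀ h3]
  nlinarith

/- ## Harmonic number bounds -/

lemma harm_eq (n : ℕ) : ((harmonic n : ℚ) : ℝ) = ∑ j ∈ Finset.range n, (1:ℝ)/(j+1) := by
  rw [harmonic]
  push_cast
  apply Finset.sum_congr rfl
  intro j _
  rw [one_div]

lemma harm_ub (n : ℕ) : ∑ j ∈ Finset.range n, (1:ℝ)/(j+1) ≤ 1 + Real.log n := by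
  rw [← harm_eq]; exact harmonic_le_one_add_log n

lemma harm_lb (n : ℕ) : Real.log n ≤ ∑ j ∈ Finset.range n, (1:ℝ)/(j+1) := by
  rcases Nat.eq_zero_or_pos n with h | h
  · simp [h]
  · rw [← harm_eq]
    refine le_trans ?_ (log_add_one_le_harmonic n)
    apply Real.log_le_log (by exact_mod_cast h)
    push_cast; linarith

lemma log3_gt_one : 1 < Real.log 3 := by
  rw [Real.lt_log_iff_exp_lt (by norm_num : (0:ℝ) < 3)]
  have := Real.exp_one_lt_d9
  linarith

/- ## Elementary limits -/

lemma tendsto_ratio_up : Tendsto (fun y : ℝ => (1+y)/(y - Real.log y)) atTop (nhds 1) := by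
  have hlog : Tendsto (fun y : ℝ => Real.log y / y) atTop (nhds 0) :=
    Real.isLittleO_log_id_atTop.tendsto_div_nhds_zero
  have hinv : Tendsto (fun y : ℝ => y⁻¹) atTop (nhds 0) := tendsto_inv_atTop_zero
  have hnum : Tendsto (fun y : ℝ => (1+y)/y) atTop (nhds 1) := by
    have h2 : Tendsto (fun y : ℝ => y⁻¹ + 1) atTop (nhds (0 + 1)) := hinv.add_const 1
    rw [zero_add] at h2
    apply h2.congr'
    filter_upwards [eventually_gt_atTop (0:ℝ)] with y hy
    field_simp
  have hden : Tendsto (fun y : ℝ => (y - Real.log y)/y) atTop (nhds 1) := by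
    have h2 : Tendsto (fun y : ℝ => 1 - Real.log y / y) atTop (nhds (1 - 0)) :=
      (tendsto_const_nhds).sub hlog
    rw [sub_zero] at h2
    apply h2.congr'
    filter_upwards [eventually_gt_atTop (0:ℝ)] with y hy
    field_simp
  have := hnum.div hden one_ne_zero
  rw [div_one] at this
  apply this.congr'
  filter_upwards [eventually_gt_atTop (0:ℝ)] with y hy
  simp only [Pi.div_apply]
  rw [div_div_div_cancel_right₀ (ne_of_gt hy)]

lemma tendsto_ratio_low : Tendsto (fun y : ℝ => (y-3)/(y + 2*Real.log y)) atTop (nhds 1) := by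
  have hlog : Tendsto (fun y : ℝ => Real.log y / y) atTop (nhds 0) :=
    Real.isLittleO_log_id_atTop.tendsto_div_nhds_zero
  have hinv : Tendsto (fun y : ℝ => y⁻¹) atTop (nhds 0) := tendsto_inv_atTop_zero
  have hnum : Tendsto (fun y : ℝ => (y-3)/y) atTop (nhds 1) := by
    have h2 : Tendsto (fun y : ℝ => 1 - 3*y⁻¹) atTop (nhds (1 - 3*0)) :=
      tendsto_const_nhds.sub (hinv.const_mul 3)
    norm_num at h2
    apply h2.congr'
    filter_upwards [eventually_gt_atTop (0:ℝ)] with y hy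
    field_simp
  have hden : Tendsto (fun y : ℝ => (y + 2*Real.log y)/y) atTop (nhds 1) := by
    have h2 : Tendsto (fun y : ℝ => 1 + 2*(Real.log y/y)) atTop (nhds (1 + 2*0)) :=
      tendsto_const_nhds.add (hlog.const_mul 2)
    norm_num at h2
    apply h2.congr'
    filter_upwards [eventually_gt_atTop (0:ℝ)] with y hy
    field_simp
  have := hnum.div hden one_ne_zero
  rw [div_one] at this
  apply this.congr'
  filter_upwards [eventually_gt_atTop (0:ℝ)] with y hy
  simp only [Pi.div_apply]
  rw [div_div_div_cancel_right₀ (ne_of_gt hy)]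

/- ## Existence of good parameters -/

lemma exists_upper {b : ℝ} (hb : 1 < b) :
    ∃ (n : ℕ) (c : ℝ), 1 ≤ n ∧ 0 < c ∧ 0 < 1 - (1 - Real.exp (-c))^n ∧
      (∑ j ∈ Finset.range n, (1:ℝ)/(j+1)) / (c * (1 - (1 - Real.exp (-c))^n)) < b := by
  have T1 : Tendsto (fun n : ℕ => (1 + Real.log n)/(Real.log n - Real.log (Real.log n)))
      atTop (nhds 1) :=
    tendsto_ratio_up.comp (Real.tendsto_log_atTop.comp tendsto_natCast_atTop_atTop)
  have T2 : Tendsto (fun n : ℕ => (1 - ((n:ℝ))⁻¹)⁻¹) atTop (nhds 1) := by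
    have h0 : Tendsto (fun n : ℕ => ((n:ℝ))⁻¹) atTop (nhds 0) :=
      tendsto_inv_atTop_zero.comp tendsto_natCast_atTop_atTop
    have h : Tendsto (fun n : ℕ => (1:ℝ) - ((n:ℝ))⁻¹) atTop (nhds (1 - 0)) :=
      tendsto_const_nhds.sub h0
    rw [sub_zero] at h
    have := h.inv₀ one_ne_zero
    norm_num at this
    exact this
  have hA : Tendsto (fun n : ℕ =>
      ((1 + Real.log n)/(Real.log n - Real.log (Real.log n))) * (1 - ((n:ℝ))⁻¹)⁻¹)
      atTop (nhds 1) := by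
    have := T1.mul T2
    rwa [mul_one] at this
  have hev : ∀ᶠ n : ℕ in atTop,
      ((1 + Real.log n)/(Real.log n - Real.log (Real.log n))) * (1 - ((n:ℝ))⁻¹)⁻¹ < b :=
    hA.eventually (eventually_lt_nhds hb)
  rcases (hev.and (eventually_ge_atTop 3)).exists with ⟨n, hAn, hn3⟩
  have hn3' : (3:ℝ) ≤ (n:ℝ) := by exact_mod_cast hn3
  set ln := Real.log n with hln
  have hln1 : 1 < ln := lt_of_lt_of_le log3_gt_one (Real.log_le_log (by norm_num) hn3')
  have hlnpos : 0 < ln := by linarith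
  have hnpos : (0:ℝ) < n := by linarith
  set c := ln - Real.log ln with hc
  have hcpos : 0 < c := by
    have := Real.log_le_sub_one_of_pos hlnpos
    simp only [hc]; linarith
  have hx : Real.exp (-c) = ln / n := by
    rw [hc, neg_sub, Real.exp_sub, Real.exp_log hlnpos, Real.exp_log hnpos]
  have hxnn : 0 < ln / n := div_pos hlnpos hnpos
  have hx1 : ln / n ≤ 1 := by
    rw [div_le_one hnpos]
    have := Real.log_le_sub_one_of_pos hnpos
    simp only [hln]; linarith
  have hg : (1 - Real.exp (-c))^n ≤ ((n:ℝ))⁻¹ := by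
    have h1 : 1 - ln/n ≤ Real.exp (-(ln/n)) := by
      have := Real.add_one_le_exp (-(ln/n)); linarith
    have h0 : 0 ≤ 1 - ln/n := by linarith
    calc (1 - Real.exp (-c))^n = (1 - ln/n)^n := by rw [hx]
      _ ≤ (Real.exp (-(ln/n)))^n := pow_le_pow_left₀ h0 h1 n
      _ = Real.exp ((n:ℝ) * (-(ln/n))) := by rw [← Real.exp_nat_mul]
      _ = Real.exp (-ln) := by congr 1; field_simp
      _ = ((n:ℝ))⁻¹ := by rw [Real.exp_neg, Real.exp_log hnpos]
  have hgpos : 0 < 1 - (1 - Real.exp (-c))^n := by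
    have h3 : ((n:ℝ))⁻¹ ≤ 1/3 := by
      rw [inv_eq_one_div]
      apply div_le_div_of_nonneg_left (by norm_num) (by norm_num) hn3'
    linarith
  refine ⟨n, c, by omega, hcpos, hgpos, ?_⟩
  have hg2 : 1 - ((n:ℝ))⁻¹ ≤ 1 - (1 - Real.exp (-c))^n := by linarith
  have hg2pos : 0 < 1 - ((n:ℝ))⁻¹ := by
    have h3 : ((n:ℝ))⁻¹ ≤ 1/3 := by
      rw [inv_eq_one_div]
      apply div_le_div_of_nonneg_left (by norm_num) (by norm_num) hn3'
    linarith
  calc (∑ j ∈ Finset.range n, (1:ℝ)/(j+1)) / (c * (1 - (1 - Real.exp (-c))^n))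
      ≤ (1 + ln) / (c * (1 - ((n:ℝ))⁻¹)) := by
        apply div_le_div₀ (by positivity) (harm_ub n) (by positivity)
        exact mul_le_mul_of_nonneg_left hg2 hcpos.le
    _ = ((1 + ln)/c) * (1 - ((n:ℝ))⁻¹)⁻¹ := by
        rw [← div_div, div_eq_mul_inv]
    _ < b := hAn

lemma exists_lower {a : ℝ} (ha : a < 1) :
    ∃ (n : ℕ) (c : ℝ), 1 ≤ n ∧ 0 < c ∧
      a < ((∑ j ∈ Finset.range n, (1:ℝ)/(j+1)) - ((1 - Real.exp (-c))^(n-1))⁻¹) / c := by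
  have T1 : Tendsto (fun n : ℕ => (Real.log n - 3)/(Real.log n + 2*Real.log (Real.log n)))
      atTop (nhds 1) :=
    tendsto_ratio_low.comp (Real.tendsto_log_atTop.comp tendsto_natCast_atTop_atTop)
  have hev : ∀ᶠ n : ℕ in atTop,
      a < (Real.log n - 3)/(Real.log n + 2*Real.log (Real.log n)) :=
    T1.eventually (eventually_gt_nhds ha)
  rcases (hev.and (eventually_ge_atTop 8)).exists with ⟨n, hAn, hn8⟩
  have hn8' : (8:ℝ) ≤ (n:ℝ) := by exact_mod_cast hn8
  have hnpos : (0:ℝ) < n := by linarith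
  set ln := Real.log n with hln
  have hln2 : 2 ≤ ln := by
    have h8 : Real.exp 2 < 8 := by
      have h := Real.exp_one_lt_d9
      have : Real.exp 2 = Real.exp 1 * Real.exp 1 := by
        rw [← Real.exp_add]; norm_num
      nlinarith [Real.exp_pos 1]
    have : 2 < Real.log 8 := by
      rw [Real.lt_log_iff_exp_lt (by norm_num : (0:ℝ) < 8)]
      exact h8
    have h2 := Real.log_le_log (by norm_num : (0:ℝ) < 8) hn8'
    linarith
  have hlnpos : 0 < ln := by linarith
  have hllnn : 0 ≤ Real.log ln := Real.log_nonneg (by linarith)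
  set c := ln + 2*Real.log ln with hc
  have hcpos : 0 < c := by simp only [hc]; linarith
  set x := Real.exp (-c) with hxdef
  have hxpos : 0 < x := Real.exp_pos _
  have hx : x = ((n:ℝ) * ln^2)⁻¹ := by
    rw [hxdef, Real.exp_neg]
    congr 1
    rw [hc, Real.exp_add, Real.exp_log hnpos, two_mul, Real.exp_add, Real.exp_log hlnpos]
    ring
  have hln2sq : 2 ≤ ln^2 := by nlinarith
  have hnx : (n:ℝ) * x ≤ 1/2 := by
    rw [hx]
    rw [mul_inv, ← mul_assoc, mul_inv_cancel₀ (ne_of_gt hnpos), one_mul]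
    rw [inv_le_iff_one_le_mul₀ (by nlinarith)]
    nlinarith
  have hx12 : x ≤ 1/2 := by
    have h1 : x ≤ (n:ℝ) * x := by nlinarith
    linarith
  have hpow : Real.exp (-1) ≤ (1 - x)^(n-1) := by
    have h1 : Real.exp (-(2*x)) ≤ 1 - x := aux_exp_lb hxpos.le hx12
    have h2 : (Real.exp (-(2*x)))^(n-1) ≤ (1-x)^(n-1) :=
      pow_le_pow_left₀ (Real.exp_pos _).le h1 (n-1)
    refine le_trans ?_ h2
    rw [← Real.exp_nat_mul]
    apply Real.exp_le_exp.mpr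
    have hcast : ((n-1 : ℕ):ℝ) ≤ (n:ℝ) := by
      have : (n-1:ℕ) ≤ n := Nat.sub_le n 1
      exact_mod_cast this
    have : ((n-1:ℕ):ℝ) * (2*x) ≤ (n:ℝ) * (2*x) := by
      apply mul_le_mul_of_nonneg_right hcast (by linarith)
    nlinarith
  have hinv : ((1 - x)^(n-1))⁻¹ ≤ 3 := by
    have h1 : 0 < Real.exp (-1) := Real.exp_pos _
    have h2 : ((1 - x)^(n-1))⁻¹ ≤ (Real.exp (-1))⁻¹ := inv_anti₀ h1 hpow
    rw [Real.exp_neg, inv_inv] at h2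
    have h3 : Real.exp 1 ≤ 3 := by
      have := Real.exp_one_lt_d9; linarith
    linarith
  refine ⟨n, c, by omega, hcpos, ?_⟩
  have hnum : ln - 3 ≤ (∑ j ∈ Finset.range n, (1:ℝ)/(j+1)) - ((1 - x)^(n-1))⁻¹ := by
    have := harm_lb n
    linarith
  have hstep : (ln - 3)/c ≤ ((∑ j ∈ Finset.range n, (1:ℝ)/(j+1)) - ((1 - x)^(n-1))⁻¹) / c := by
    gcongr
  calc a < (ln - 3)/(ln + 2*Real.log ln) := hAn
    _ = (ln - 3)/c := by rw [hc]
    _ ≤ _ := hstep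

/- ## Laplace-transform consequences -/

section main
variable {f : ℝ → ℝ} {θ α : ℝ}

lemma integ_exp (hθ : 0 < θ)
    (hLT : ∀ lam > (0:ℝ), ∫ s in Ioi (0:ℝ), Real.exp (-lam * s) * f s
      = lam⁻¹ * Real.exp (-θ * lam ^ α))
    {l : ℝ} (hl : 0 < l) :
    IntegrableOn (fun s => Real.exp (-l * s) * f s) (Ioi 0) := by
  by_contra h
  have h0 : ∫ s in Ioi (0:ℝ), Real.exp (-l * s) * f s = 0 := MeasureTheory.integral_undef h
  rw [hLT l hl] at h0
  have : l⁻¹ * Real.exp (-θ * l ^ α) > 0 := by positivity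
  linarith

lemma LT_pow (hθ : 0 < θ)
    (hLT : ∀ lam > (0:ℝ), ∫ s in Ioi (0:ℝ), Real.exp (-lam * s) * f s
      = lam⁻¹ * Real.exp (-θ * lam ^ α))
    {l : ℝ} (hl : 0 < l) (j : ℕ) :
    IntegrableOn (fun s => (Real.exp (-l * s))^(j+1) * f s) (Ioi 0) ∧
    ∫ s in Ioi (0:ℝ), (Real.exp (-l * s))^(j+1) * f s
      = (((j:ℝ)+1) * l)⁻¹ * Real.exp (-θ * ((((j:ℝ)+1)) * l) ^ α) := by
  have hkl : 0 < ((j:ℝ)+1) * l := by positivity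
  have hfe : (fun s => (Real.exp (-l * s))^(j+1) * f s)
      = fun s => Real.exp (-(((j:ℝ)+1) * l) * s) * f s := by
    funext s
    rw [show (-(((j:ℝ)+1) * l) * s) = ((j:ℕ)+1 : ℕ) * (-l * s) by push_cast; ring,
      Real.exp_nat_mul]
  rw [hfe]
  exact ⟨integ_exp hθ hLT hkl, hLT _ hkl⟩

lemma comb (hθ : 0 < θ)
    (hLT : ∀ lam > (0:ℝ), ∫ s in Ioi (0:ℝ), Real.exp (-lam * s) * f s
      = lam⁻¹ * Real.exp (-θ * lam ^ α))
    {l : ℝ} (hl : 0 < l) (N : ℕ) (a : ℕ → ℝ) :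
    IntegrableOn (fun s => ∑ j ∈ Finset.range N, a j * ((Real.exp (-l * s))^(j+1) * f s)) (Ioi 0) ∧
    ∫ s in Ioi (0:ℝ), (∑ j ∈ Finset.range N, a j * ((Real.exp (-l * s))^(j+1) * f s)) =
      ∑ j ∈ Finset.range N, a j * ((((j:ℝ)+1) * l)⁻¹ * Real.exp (-θ * ((((j:ℝ)+1)) * l) ^ α)) := by
  have hint : ∀ j ∈ Finset.range N,
      Integrable (fun s => a j * ((Real.exp (-l * s))^(j+1) * f s))
        (volume.restrict (Ioi 0)) := by
    intro j _
    exact ((LT_pow hθ hLT hl j).1).const_mul (a j)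
  constructor
  · exact MeasureTheory.integrable_finset_sum _ hint
  · rw [MeasureTheory.integral_finset_sum _ hint]
    apply Finset.sum_congr rfl
    intro j _
    rw [MeasureTheory.integral_const_mul, (LT_pow hθ hLT hl j).2]

lemma intG (hθ : 0 < θ)
    (hLT : ∀ lam > (0:ℝ), ∫ s in Ioi (0:ℝ), Real.exp (-lam * s) * f s
      = lam⁻¹ * Real.exp (-θ * lam ^ α))
    {l : ℝ} (hl : 0 < l) (n : ℕ) :
    IntegrableOn (fun s => (1 - (1 - Real.exp (-l * s))^n) * f s) (Ioi 0) ∧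
    ∫ s in Ioi (0:ℝ), (1 - (1 - Real.exp (-l * s))^n) * f s =
      ∑ j ∈ Finset.range n, ((-1:ℝ)^j * (n.choose (j+1))) *
        ((((j:ℝ)+1) * l)⁻¹ * Real.exp (-θ * ((((j:ℝ)+1)) * l) ^ α)) := by
  have hfe : (fun s => (1 - (1 - Real.exp (-l * s))^n) * f s)
      = fun s => ∑ j ∈ Finset.range n,
        ((-1:ℝ)^j * (n.choose (j+1))) * ((Real.exp (-l * s))^(j+1) * f s) := by
    funext s
    rw [aux_one_sub_pow, Finset.sum_mul]
    apply Finset.sum_congr rfl; intro j _; ring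
  rw [hfe]
  exact comb hθ hLT hl n _

lemma intD (hθ : 0 < θ)
    (hLT : ∀ lam > (0:ℝ), ∫ s in Ioi (0:ℝ), Real.exp (-lam * s) * f s
      = lam⁻¹ * Real.exp (-θ * lam ^ α))
    {l : ℝ} (hl : 0 < l) (m : ℕ) :
    IntegrableOn (fun s => (Real.exp (-l * s) * (1 - Real.exp (-l * s))^m) * f s) (Ioi 0) ∧
    ∫ s in Ioi (0:ℝ), (Real.exp (-l * s) * (1 - Real.exp (-l * s))^m) * f s =
      ∑ j ∈ Finset.range (m+1), ((-1:ℝ)^j * (m.choose j)) *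
        ((((j:ℝ)+1) * l)⁻¹ * Real.exp (-θ * ((((j:ℝ)+1)) * l) ^ α)) := by
  have hfe : (fun s => (Real.exp (-l * s) * (1 - Real.exp (-l * s))^m) * f s)
      = fun s => ∑ j ∈ Finset.range (m+1),
        ((-1:ℝ)^j * (m.choose j)) * ((Real.exp (-l * s))^(j+1) * f s) := by
    funext s
    rw [aux_mul_pow, Finset.sum_mul]
    apply Finset.sum_congr rfl; intro j _; ring
  rw [hfe]
  exact comb hθ hLT hl (m+1) _

lemma integ_f_Ioc (hfm : Measurable f) (hfnn : ∀ s, 0 ≤ f s) (hθ : 0 < θ)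
    (hLT : ∀ lam > (0:ℝ), ∫ s in Ioi (0:ℝ), Real.exp (-lam * s) * f s
      = lam⁻¹ * Real.exp (-θ * lam ^ α))
    {t : ℝ} (ht : 0 < t) : IntegrableOn f (Ioc 0 t) := by
  have h1 : IntegrableOn (fun s => Real.exp (-1 * s) * f s) (Ioi 0) := by
    by_contra h
    have h0 : ∫ s in Ioi (0:ℝ), Real.exp (-1 * s) * f s = 0 := MeasureTheory.integral_undef h
    rw [hLT 1 one_pos] at h0
    have : (1:ℝ)⁻¹ * Real.exp (-θ * 1 ^ α) > 0 := by positivity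
    linarith
  have h2 : IntegrableOn (fun s => Real.exp t * (Real.exp (-1 * s) * f s)) (Ioc 0 t) :=
    ((h1.mono_set Ioc_subset_Ioi_self).const_mul _)
  apply h2.mono' (hfm.aestronglyMeasurable.restrict)
  rw [ae_restrict_iff' measurableSet_Ioc]
  apply Filter.Eventually.of_forall
  intro s hs
  rw [Real.norm_of_nonneg (hfnn s)]
  have hle : (1:ℝ) ≤ Real.exp t * Real.exp (-1 * s) := by
    rw [← Real.exp_add]
    have : 0 ≤ t + (-1 * s) := by nlinarith [hs.2]
    calc (1:ℝ) = Real.exp 0 := by simp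
    _ ≤ _ := Real.exp_le_exp.mpr this
  nlinarith [hfnn s, mul_le_mul_of_nonneg_right hle (hfnn s)]

lemma upper_bd (hfm : Measurable f) (hfnn : ∀ s, 0 ≤ f s) (hθ : 0 < θ)
    (hLT : ∀ lam > (0:ℝ), ∫ s in Ioi (0:ℝ), Real.exp (-lam * s) * f s
      = lam⁻¹ * Real.exp (-θ * lam ^ α))
    {t c : ℝ} (ht : 0 < t) (hc : 0 < c) (n : ℕ) :
    (1 - (1 - Real.exp (-c))^n) * ∫ s in Ioc (0:ℝ) t, f s
      ≤ ∫ s in Ioi (0:ℝ), (1 - (1 - Real.exp (-(c/t) * s))^n) * f s := by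
  have hl : 0 < c / t := div_pos hc ht
  have hind : IntegrableOn (fun s => (1 - (1 - Real.exp (-c))^n) * (Ioc (0:ℝ) t).indicator f s)
      (Ioi 0) := by
    exact (((integ_f_Ioc hfm hfnn hθ hLT ht).integrable_indicator
      measurableSet_Ioc).integrableOn).const_mul _
  have hmono : ∀ s ∈ Ioi (0:ℝ),
      (1 - (1 - Real.exp (-c))^n) * (Ioc (0:ℝ) t).indicator f s
        ≤ (1 - (1 - Real.exp (-(c/t) * s))^n) * f s := by
    intro s hs
    simp only [mem_Ioi] at hs
    by_cases hst : s ≤ t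
    · rw [indicator_of_mem (by exact ⟨hs, hst⟩)]
      apply mul_le_mul_of_nonneg_right _ (hfnn s)
      have h1 : 0 ≤ 1 - Real.exp (-(c/t) * s) := by
        have : Real.exp (-(c/t) * s) ≤ 1 := by
          rw [Real.exp_le_one_iff]; nlinarith
        linarith
      have h2 : 1 - Real.exp (-(c/t) * s) ≤ 1 - Real.exp (-c) := by
        have : Real.exp (-c) ≤ Real.exp (-(c/t) * s) := by
          apply Real.exp_le_exp.mpr
          have h3 : (c/t)*s ≤ c := by
            have := mul_le_mul_of_nonneg_left hst hl.le
            rwa [div_mul_cancel₀ c (ne_of_gt ht)] at this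
          linarith
        linarith
      have := pow_le_pow_left₀ h1 h2 n
      linarith
    · rw [indicator_of_notMem (by simp [mem_Ioc]; intro _; linarith)]
      rw [mul_zero]
      apply mul_nonneg _ (hfnn s)
      have h0 : 0 ≤ 1 - Real.exp (-(c/t) * s) := by
        have : Real.exp (-(c/t) * s) ≤ 1 := by
          rw [Real.exp_le_one_iff]; nlinarith
        linarith
      have h1 : 1 - Real.exp (-(c/t) * s) ≤ 1 := by
        linarith [Real.exp_pos (-(c/t) * s)]
      have := pow_le_one₀ h0 h1 (n := n)
      linarith
  have := MeasureTheory.setIntegral_mono_on hind (intG hθ hLT hl n).1 measurableSet_Ioi hmono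
  rw [MeasureTheory.integral_const_mul, MeasureTheory.setIntegral_indicator measurableSet_Ioc,
    Set.inter_eq_right.mpr Ioc_subset_Ioi_self] at this
  exact this

lemma lower_bd (hfm : Measurable f) (hfnn : ∀ s, 0 ≤ f s) (hθ : 0 < θ)
    (hLT : ∀ lam > (0:ℝ), ∫ s in Ioi (0:ℝ), Real.exp (-lam * s) * f s
      = lam⁻¹ * Real.exp (-θ * lam ^ α))
    {t c : ℝ} (ht : 0 < t) (hc : 0 < c) (n : ℕ) :
    (∫ s in Ioi (0:ℝ), (1 - (1 - Real.exp (-(c/t) * s))^n) * f s)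
      - ((n:ℝ) / (1 - Real.exp (-c))^(n-1)) *
        ∫ s in Ioi (0:ℝ), (Real.exp (-(c/t) * s) * (1 - Real.exp (-(c/t) * s))^(n-1)) * f s
      ≤ ∫ s in Ioc (0:ℝ) t, f s := by
  have hl : 0 < c / t := div_pos hc ht
  set K : ℝ := (n:ℝ) / (1 - Real.exp (-c))^(n-1) with hK
  have hec : Real.exp (-c) < 1 := by
    rw [Real.exp_lt_one_iff]; linarith
  have hecpos := Real.exp_pos (-c)
  have hKnn : 0 ≤ K := by
    apply div_nonneg (Nat.cast_nonneg n)
    apply pow_nonneg; linarith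
  have hcomb : IntegrableOn (fun s => ((1 - (1 - Real.exp (-(c/t) * s))^n)
      - K * (Real.exp (-(c/t) * s) * (1 - Real.exp (-(c/t) * s))^(n-1))) * f s) (Ioi 0) := by
    have h1 := (intG hθ hLT hl n).1
    have h2 := ((intD hθ hLT hl (n-1)).1).const_mul K
    have h3 := h1.sub h2
    apply h3.congr
    apply Filter.Eventually.of_forall
    intro s
    simp only [Pi.sub_apply]
    ring
  have hind : IntegrableOn (fun s => (Ioc (0:ℝ) t).indicator f s) (Ioi 0) :=
    ((integ_f_Ioc hfm hfnn hθ hLT ht).integrable_indicator measurableSet_Ioc).integrableOn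
  have hmono : ∀ s ∈ Ioi (0:ℝ),
      ((1 - (1 - Real.exp (-(c/t) * s))^n)
        - K * (Real.exp (-(c/t) * s) * (1 - Real.exp (-(c/t) * s))^(n-1))) * f s
      ≤ (Ioc (0:ℝ) t).indicator f s := by
    intro s hs
    simp only [mem_Ioi] at hs
    set x : ℝ := Real.exp (-(c/t) * s) with hx
    have hx0 : 0 < x := Real.exp_pos _
    have hx1 : x < 1 := by
      rw [hx, Real.exp_lt_one_iff]; nlinarith
    have hDnn : 0 ≤ x * (1 - x)^(n-1) := by
      apply mul_nonneg hx0.le; apply pow_nonneg; linarith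
    by_cases hst : s ≤ t
    · rw [indicator_of_mem (by exact ⟨hs, hst⟩)]
      have hG1 : 1 - (1 - x)^n ≤ 1 := by
        have : (0:ℝ) ≤ (1-x)^n := by apply pow_nonneg; linarith
        linarith
      have : (1 - (1 - x)^n) - K * (x * (1-x)^(n-1)) ≤ 1 := by nlinarith
      nlinarith [hfnn s, mul_le_mul_of_nonneg_right this (hfnn s)]
    · rw [indicator_of_notMem (by simp [mem_Ioc]; intro _; linarith)]
      apply mul_nonpos_of_nonpos_of_nonneg _ (hfnn s)
      have hxc : x ≤ Real.exp (-c) := by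
        rw [hx]
        apply Real.exp_le_exp.mpr
        have h3 : c ≤ (c/t)*s := by
          have h4 : t < s := lt_of_not_ge hst
          have := mul_le_mul_of_nonneg_left h4.le hl.le
          rw [div_mul_cancel₀ c (ne_of_gt ht)] at this
          linarith
        linarith
      have hbern : 1 - (1 - x)^n ≤ n * x := by
        have h5 := one_add_mul_le_pow (by linarith : (-2:ℝ) ≤ -x) n
        have : 1 + (n:ℝ) * (-x) ≤ (1-x)^n := by
          rw [show (1:ℝ) - x = 1 + (-x) by ring]; exact h5
        linarith
      have hpow : (1 - Real.exp (-c))^(n-1) ≤ (1-x)^(n-1) :=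
        pow_le_pow_left₀ (by linarith) (by linarith) (n-1)
      have hKD : (n:ℝ) * x ≤ K * (x * (1-x)^(n-1)) := by
        rw [hK]
        rw [div_mul_eq_mul_div]
        rw [le_div_iff₀ (by apply pow_pos; linarith)]
        calc (n:ℝ) * x * (1 - Real.exp (-c))^(n-1)
            ≤ (n:ℝ) * x * (1-x)^(n-1) := by
              apply mul_le_mul_of_nonneg_left hpow
              positivity
          _ = (n:ℝ) * (x * (1-x)^(n-1)) := by ring
      linarith
  have := MeasureTheory.setIntegral_mono_on hcomb hind measurableSet_Ioi hmono
  rw [MeasureTheory.setIntegral_indicator measurableSet_Ioc,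
    Set.inter_eq_right.mpr Ioc_subset_Ioi_self] at this
  refine le_trans (le_of_eq ?_) this
  rw [← MeasureTheory.integral_const_mul, ← MeasureTheory.integral_sub (intG hθ hLT hl n).1
    (((intD hθ hLT hl (n-1)).1).const_mul K)]
  apply MeasureTheory.integral_congr_ae
  apply Filter.Eventually.of_forall
  intro s
  simp only [Pi.sub_apply]
  ring

lemma tendsto_comb (hθ : 0 < θ) (hα : α ∈ Ioo (0:ℝ) 1) {c : ℝ} (hc : 0 < c)
    (N : ℕ) (a : ℕ → ℝ) :
    Tendsto (fun t : ℝ => (c/t) * ∑ j ∈ Finset.range N,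
        a j * ((((j:ℝ)+1) * (c/t))⁻¹ * Real.exp (-θ * ((((j:ℝ)+1)) * (c/t)) ^ α)))
      atTop (nhds (∑ j ∈ Finset.range N, a j * ((j:ℝ)+1)⁻¹)) := by
  have hF : Tendsto (fun t : ℝ => ∑ j ∈ Finset.range N,
      a j * (((j:ℝ)+1)⁻¹ * Real.exp (-θ * ((((j:ℝ)+1)) * (c/t)) ^ α)))
      atTop (nhds (∑ j ∈ Finset.range N, a j * ((j:ℝ)+1)⁻¹)) := by
    apply tendsto_finset_sum
    intro j _
    have h1 : Tendsto (fun t : ℝ => (((j:ℝ)+1)) * (c/t)) atTop (nhds 0) := by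
      have : Tendsto (fun t : ℝ => ((((j:ℝ)+1)) * c)/t) atTop (nhds 0) :=
        Tendsto.div_atTop tendsto_const_nhds tendsto_id
      apply this.congr
      intro t; ring
    have h2 : Tendsto (fun x : ℝ => x ^ α) (nhds 0) (nhds 0) := by
      have := (Real.continuousAt_rpow_const 0 α (Or.inr hα.1.le)).tendsto
      rwa [Real.zero_rpow (ne_of_gt hα.1)] at this
    have h3 : Tendsto (fun t : ℝ => Real.exp (-θ * ((((j:ℝ)+1)) * (c/t)) ^ α))
        atTop (nhds 1) := by
      have h4 := (h2.comp h1)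
      have h5 : Tendsto (fun t : ℝ => -θ * ((((j:ℝ)+1)) * (c/t)) ^ α) atTop (nhds 0) := by
        have := h4.const_mul (-θ)
        simpa using this
      have := (Real.continuous_exp.tendsto 0).comp h5
      simpa [Function.comp_def] using this
    have := h3.const_mul (a j * ((j:ℝ)+1)⁻¹)
    simp only [mul_one] at this
    apply this.congr
    intro t
    ring
  apply hF.congr'
  filter_upwards [eventually_gt_atTop (0:ℝ)] with t ht
  have hlt : (0:ℝ) < c / t := div_pos hc ht
  rw [Finset.mul_sum]
  apply Finset.sum_congr rfl
  intro j _
  have hj : ((j:ℝ)+1) ≠ 0 := by positivity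
  field_simp

end main

/-- Karamata-type conclusion for class (C1): if (ℒf)(λ) = λ^{-1} e^{-θλ^α} then the
Cesàro mean M_t(f) = (1/t)∫₀^t f ~ exp(-θ t^{-α}) as t → ∞, and M_t(f) → 1. -/
theorem cesaro_mean_asymptotics_C1
    (f : ℝ → ℝ) (θ α : ℝ) (hθ : 0 < θ) (hα : α ∈ Ioo (0:ℝ) 1)
    (hfm : Measurable f) (hfnn : ∀ s, 0 ≤ f s)
    (hLT : ∀ lam > (0:ℝ),
      ∫ s in Ioi (0:ℝ), Real.exp (-lam * s) * f s = lam⁻¹ * Real.exp (-θ * lam ^ α)) :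
    Tendsto (fun t : ℝ =>
        ((1 / t) * ∫ s in (0:ℝ)..t, f s) / Real.exp (-θ * t ^ (-α)))
      atTop (nhds 1)
    ∧ Tendsto (fun t : ℝ => (1 / t) * ∫ s in (0:ℝ)..t, f s) atTop (nhds 1) := by
  have hM : Tendsto (fun t : ℝ => (1 / t) * ∫ s in (0:ℝ)..t, f s) atTop (nhds 1) := by
    rw [tendsto_order]
    constructor
    · -- lower bound part
      intro a ha
      obtain ⟨n, c, hn1, hc, hlt⟩ := exists_lower ha
      have hecpos := Real.exp_pos (-c)
      have hec1 : Real.exp (-c) < 1 := by rw [Real.exp_lt_one_iff]; linarith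
      have hppos : 0 < (1 - Real.exp (-c))^(n-1) := by apply pow_pos; linarith
      have hnR : (0:ℝ) < (n:ℝ) := by exact_mod_cast hn1
      set K : ℝ := (n:ℝ) / (1 - Real.exp (-c))^(n-1) with hK
      have hW1 : Tendsto (fun t : ℝ => (c/t) * ∑ j ∈ Finset.range n,
          ((-1:ℝ)^j * (n.choose (j+1))) *
            ((((j:ℝ)+1) * (c/t))⁻¹ * Real.exp (-θ * ((((j:ℝ)+1)) * (c/t)) ^ α)))
          atTop (nhds (∑ j ∈ Finset.range n, ((-1:ℝ)^j * (n.choose (j+1))) * ((j:ℝ)+1)⁻¹)) :=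
        tendsto_comb hθ hα hc n _
      have hW2 : Tendsto (fun t : ℝ => (c/t) * ∑ j ∈ Finset.range ((n-1)+1),
          ((-1:ℝ)^j * ((n-1).choose j)) *
            ((((j:ℝ)+1) * (c/t))⁻¹ * Real.exp (-θ * ((((j:ℝ)+1)) * (c/t)) ^ α)))
          atTop (nhds (∑ j ∈ Finset.range ((n-1)+1),
            ((-1:ℝ)^j * ((n-1).choose j)) * ((j:ℝ)+1)⁻¹)) :=
        tendsto_comb hθ hα hc ((n-1)+1) _
      have hv1 : (∑ j ∈ Finset.range n, ((-1:ℝ)^j * (n.choose (j+1))) * ((j:ℝ)+1)⁻¹)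
          = ∑ j ∈ Finset.range n, (1:ℝ)/(j+1) := by
        rw [← aux_altH n]
        apply Finset.sum_congr rfl
        intro j _
        rw [div_eq_mul_inv]
      have hv2 : (∑ j ∈ Finset.range ((n-1)+1), ((-1:ℝ)^j * ((n-1).choose j)) * ((j:ℝ)+1)⁻¹)
          = 1/(n:ℝ) := by
        have hP := aux_P (n-1)
        have hcast : (((n-1):ℕ):ℝ) + 1 = (n:ℝ) := by
          rw [Nat.cast_sub hn1]; push_cast; ring
        rw [hcast] at hP
        rw [← hP]
        apply Finset.sum_congr rfl
        intro j _
        rw [div_eq_mul_inv]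
      rw [hv1] at hW1
      rw [hv2] at hW2
      have hlim : Tendsto (fun t : ℝ =>
          ((c/t) * (∑ j ∈ Finset.range n,
            ((-1:ℝ)^j * (n.choose (j+1))) *
              ((((j:ℝ)+1) * (c/t))⁻¹ * Real.exp (-θ * ((((j:ℝ)+1)) * (c/t)) ^ α)))
          - K * ((c/t) * ∑ j ∈ Finset.range ((n-1)+1),
            ((-1:ℝ)^j * ((n-1).choose j)) *
              ((((j:ℝ)+1) * (c/t))⁻¹ * Real.exp (-θ * ((((j:ℝ)+1)) * (c/t)) ^ α)))) / c)
          atTop (nhds (((∑ j ∈ Finset.range n, (1:ℝ)/(j+1)) - K * (1/(n:ℝ))) / c)) :=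
        (hW1.sub (hW2.const_mul K)).div_const c
      have hKval : K * (1/(n:ℝ)) = ((1 - Real.exp (-c))^(n-1))⁻¹ := by
        rw [hK]
        field_simp
      rw [hKval] at hlim
      have hev := hlim.eventually (eventually_gt_nhds hlt)
      filter_upwards [hev, eventually_gt_atTop (0:ℝ)] with t hR ht
      have hl : 0 < c / t := div_pos hc ht
      have hbd := lower_bd hfm hfnn hθ hLT ht hc n
      rw [(intG hθ hLT hl n).2, (intD hθ hLT hl (n-1)).2] at hbd
      rw [intervalIntegral.integral_of_le ht.le]
      set S1 := ∑ j ∈ Finset.range n,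
        ((-1:ℝ)^j * (n.choose (j+1))) *
          ((((j:ℝ)+1) * (c/t))⁻¹ * Real.exp (-θ * ((((j:ℝ)+1)) * (c/t)) ^ α)) with hS1
      set S2 := ∑ j ∈ Finset.range ((n-1)+1),
        ((-1:ℝ)^j * ((n-1).choose j)) *
          ((((j:ℝ)+1) * (c/t))⁻¹ * Real.exp (-θ * ((((j:ℝ)+1)) * (c/t)) ^ α)) with hS2
      set U := ∫ s in Ioc (0:ℝ) t, f s with hU
      have hRe : ((c/t) * S1 - K * ((c/t) * S2)) / c = (S1 - K * S2) / t := by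
        field_simp
      rw [hRe] at hR
      have hmono : (S1 - K * S2)/t ≤ (1/t) * U := by
        rw [one_div, inv_mul_eq_div]
        gcongr
      exact lt_of_lt_of_le hR hmono
    · -- upper bound part
      intro b hb
      obtain ⟨n, c, hn1, hc, hgpos, hlt⟩ := exists_upper hb
      have hW1 : Tendsto (fun t : ℝ => (c/t) * ∑ j ∈ Finset.range n,
          ((-1:ℝ)^j * (n.choose (j+1))) *
            ((((j:ℝ)+1) * (c/t))⁻¹ * Real.exp (-θ * ((((j:ℝ)+1)) * (c/t)) ^ α)))
          atTop (nhds (∑ j ∈ Finset.range n, ((-1:ℝ)^j * (n.choose (j+1))) * ((j:ℝ)+1)⁻¹)) :=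
        tendsto_comb hθ hα hc n _
      have hv1 : (∑ j ∈ Finset.range n, ((-1:ℝ)^j * (n.choose (j+1))) * ((j:ℝ)+1)⁻¹)
          = ∑ j ∈ Finset.range n, (1:ℝ)/(j+1) := by
        rw [← aux_altH n]
        apply Finset.sum_congr rfl
        intro j _
        rw [div_eq_mul_inv]
      rw [hv1] at hW1
      have hlim := hW1.div_const (c * (1 - (1 - Real.exp (-c))^n))
      have hev := hlim.eventually (eventually_lt_nhds hlt)
      filter_upwards [hev, eventually_gt_atTop (0:ℝ)] with t hR ht
      have hl : 0 < c / t := div_pos hc ht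
      have hbd := upper_bd hfm hfnn hθ hLT ht hc n
      rw [(intG hθ hLT hl n).2] at hbd
      rw [intervalIntegral.integral_of_le ht.le]
      set S1 := ∑ j ∈ Finset.range n,
        ((-1:ℝ)^j * (n.choose (j+1))) *
          ((((j:ℝ)+1) * (c/t))⁻¹ * Real.exp (-θ * ((((j:ℝ)+1)) * (c/t)) ^ α)) with hS1
      set U := ∫ s in Ioc (0:ℝ) t, f s with hU
      have hmono : (1/t) * U ≤ ((c/t) * S1)/(c * (1 - (1 - Real.exp (-c))^n)) := by
        have he : ((c/t) * S1)/(c * (1 - (1 - Real.exp (-c))^n))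
            = S1/(t * (1 - (1 - Real.exp (-c))^n)) := by
          field_simp
        rw [he, one_div, inv_mul_eq_div, div_le_div_iff₀ ht (by positivity)]
        nlinarith [hbd]
      exact lt_of_le_of_lt hmono hR
  refine ⟨?_, hM⟩
  have hE : Tendsto (fun t : ℝ => Real.exp (-θ * t ^ (-α))) atTop (nhds 1) := by
    have h1 : Tendsto (fun t : ℝ => t ^ (-α)) atTop (nhds 0) := tendsto_rpow_neg_atTop hα.1
    have h2 : Tendsto (fun t : ℝ => -θ * t ^ (-α)) atTop (nhds 0) := by
      have := h1.const_mul (-θ)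
      simpa using this
    have := (Real.continuous_exp.tendsto 0).comp h2
    simpa [Function.comp_def] using this
  have := hM.div hE one_ne_zero
  rw [div_one] at this
  exact this
end

section
/- Suppose f : (0,∞) → [0,∞) is measurable and bounded, and its Laplace transform satisfies (ℒf)(λ) = λ^{-1} L(1/λ) for all small λ > 0, where L(y) = (1-ε)exp(-θ μ₀ (log y)^{-1}) for constants θ > 0, μ₀ > 0, ε ∈ (0,1). Then (1/t)∫₀^t f(s) ds ~ (1-ε)exp(-θ μ₀ (log t)^{-1}) as t → ∞; in particular (1/t)∫₀^t f(s) ds → 1-ε. -/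
open Real Filter MeasureTheory Set Polynomial
open scoped Topology

-- change of variables
lemma cov (lam : ℝ) (hlam : 0 < lam) (h : ℝ → ℝ) :
    ∫ u in Ioo (0:ℝ) 1, h u
      = ∫ s in Ioi (0:ℝ), (lam * Real.exp (-lam * s)) * h (Real.exp (-lam * s)) := by
  have himg : (fun s : ℝ => Real.exp (-lam * s)) '' (Ioi 0) = Ioo (0:ℝ) 1 := by
    ext u
    constructor
    · rintro ⟨s, hs, rfl⟩
      exact ⟨Real.exp_pos _, by
        rw [Real.exp_lt_one_iff]
        have : 0 < lam * s := mul_pos hlam hs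
        linarith⟩
    · rintro ⟨hu0, hu1⟩
      refine ⟨-Real.log u / lam, ?_, ?_⟩
      · have : Real.log u < 0 := Real.log_neg hu0 hu1
        exact div_pos (by linarith) hlam
      · show Real.exp (-lam * (-Real.log u / lam)) = u
        rw [show -lam * (-Real.log u / lam) = Real.log u by field_simp]
        exact Real.exp_log hu0
  have hderiv : ∀ s ∈ Ioi (0:ℝ), HasDerivWithinAt (fun s : ℝ => Real.exp (-lam * s))
      (-lam * Real.exp (-lam * s)) (Ioi 0) s := by
    intro s hs
    have h1 : HasDerivAt (fun s : ℝ => -lam * s) (-lam) s := by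
      simpa using (hasDerivAt_id s).const_mul (-lam)
    have : HasDerivAt (fun s : ℝ => Real.exp (-lam * s)) (Real.exp (-lam * s) * -lam) s :=
      (Real.hasDerivAt_exp _).comp s h1
    simpa [mul_comm] using this.hasDerivWithinAt
  have hinj : InjOn (fun s : ℝ => Real.exp (-lam * s)) (Ioi 0) := by
    intro a _ b _ hab
    have h2 : -lam * a = -lam * b := Real.exp_injective hab
    exact mul_left_cancel₀ (neg_ne_zero.mpr hlam.ne') h2
  rw [← himg, integral_image_eq_integral_abs_deriv_smul measurableSet_Ioi hderiv hinj]
  apply setIntegral_congr_fun measurableSet_Ioi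
  intro s _
  show |(-lam * Real.exp (-lam * s))| • h (Real.exp (-lam * s)) = _
  rw [neg_mul, abs_neg, abs_of_pos (by positivity), smul_eq_mul]

lemma integ (f : ℝ → ℝ) (M : ℝ) (hfm : Measurable f) (hfnn : ∀ s, 0 ≤ f s)
    (hfM : ∀ s, f s ≤ M) (g : ℝ → ℝ) (hg : Measurable g) (K : ℝ)
    (hK : ∀ u ∈ Ioc (0:ℝ) 1, |g u| ≤ K) (lam : ℝ) (hlam : 0 < lam) :
    IntegrableOn (fun s => Real.exp (-lam * s) * g (Real.exp (-lam * s)) * f s) (Ioi (0:ℝ)) := by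
  have hM : 0 ≤ M := le_trans (hfnn 0) (hfM 0)
  have hK0 : 0 ≤ K := le_trans (abs_nonneg _) (hK 1 ⟨one_pos, le_refl 1⟩)
  have hmaj : IntegrableOn (fun s => (K * M) * Real.exp (-lam * s)) (Ioi (0:ℝ)) :=
    (exp_neg_integrableOn_Ioi 0 hlam).const_mul _
  refine Integrable.mono' hmaj ?_ ?_
  · exact ((Real.measurable_exp.comp (measurable_const.mul measurable_id)).mul
      (hg.comp (Real.measurable_exp.comp (measurable_const.mul measurable_id)))).mul hfm
      |>.aestronglyMeasurable
  · filter_upwards [ae_restrict_mem measurableSet_Ioi] with s hs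
    have he1 : Real.exp (-lam * s) ∈ Ioc (0:ℝ) 1 := by
      constructor
      · exact Real.exp_pos _
      · rw [Real.exp_le_one_iff]
        have : 0 < lam * s := mul_pos hlam hs
        linarith
    have : |Real.exp (-lam * s) * g (Real.exp (-lam * s)) * f s|
        ≤ Real.exp (-lam * s) * (K * M) := by
      rw [abs_mul, abs_mul, abs_of_pos (Real.exp_pos _), abs_of_nonneg (hfnn s), mul_assoc]
      refine mul_le_mul_of_nonneg_left ?_ (Real.exp_pos _).le
      exact mul_le_mul (hK _ he1) (hfM s) (hfnn s) hK0
    rw [norm_eq_abs, show K*M*Real.exp (-lam*s) = Real.exp (-lam*s)*(K*M) by ring]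
    exact this

lemma errb (f : ℝ → ℝ) (M : ℝ) (hfm : Measurable f) (hfnn : ∀ s, 0 ≤ f s)
    (hfM : ∀ s, f s ≤ M) (g : ℝ → ℝ) (hg : Measurable g) (K : ℝ)
    (hK : ∀ u ∈ Ioc (0:ℝ) 1, |g u| ≤ K) (lam : ℝ) (hlam : 0 < lam) :
    |lam * ∫ s in Ioi (0:ℝ), Real.exp (-lam * s) * g (Real.exp (-lam * s)) * f s|
      ≤ M * ∫ u in Ioo (0:ℝ) 1, |g u| := by
  have hM : 0 ≤ M := le_trans (hfnn 0) (hfM 0)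
  have hexp : ∀ s : ℝ, s ∈ Ioi (0:ℝ) → Real.exp (-lam * s) ∈ Ioc (0:ℝ) 1 := by
    intro s hs
    refine ⟨Real.exp_pos _, ?_⟩
    rw [Real.exp_le_one_iff]
    have : 0 < lam * s := mul_pos hlam hs
    linarith
  have hint := integ f M hfm hfnn hfM g hg K hK lam hlam
  have hGm : Measurable (fun u : ℝ => lam * |g u|) := (hg.abs.const_mul _)
  have hGint : IntegrableOn
      (fun s => Real.exp (-lam*s) * (lam * |g (Real.exp (-lam*s))|) * (fun _ : ℝ => M) s)
      (Ioi (0:ℝ)) := by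
    exact integ (fun _ => M) M measurable_const (fun _ => hM) (fun _ => le_refl M)
      (fun u => lam * |g u|) hGm (lam * K)
      (fun u hu => by
        rw [abs_of_nonneg (by positivity)]
        exact mul_le_mul_of_nonneg_left (hK u hu) hlam.le) lam hlam
  have habs := norm_integral_le_integral_norm (μ := volume.restrict (Ioi (0:ℝ)))
      (fun s => Real.exp (-lam * s) * g (Real.exp (-lam * s)) * f s)
  simp only [Real.norm_eq_abs] at habs
  calc |lam * ∫ s in Ioi (0:ℝ), Real.exp (-lam * s) * g (Real.exp (-lam * s)) * f s|
      = lam * |∫ s in Ioi (0:ℝ), Real.exp (-lam * s) * g (Real.exp (-lam * s)) * f s| := by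
        rw [abs_mul, abs_of_pos hlam]
    _ ≤ lam * ∫ s in Ioi (0:ℝ), |Real.exp (-lam * s) * g (Real.exp (-lam * s)) * f s| :=
        mul_le_mul_of_nonneg_left habs hlam.le
    _ ≤ lam * ∫ s in Ioi (0:ℝ),
          Real.exp (-lam*s) * (lam * |g (Real.exp (-lam*s))|) * M / lam := by
        refine mul_le_mul_of_nonneg_left ?_ hlam.le
        refine setIntegral_mono_on hint.abs ?_ measurableSet_Ioi ?_
        · exact hGint.div_const lam
        · intro s hs
          rw [abs_mul, abs_mul, abs_of_pos (Real.exp_pos _), abs_of_nonneg (hfnn s)]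
          rw [show Real.exp (-lam*s) * (lam * |g (Real.exp (-lam*s))|) * M / lam
              = Real.exp (-lam*s) * |g (Real.exp (-lam*s))| * M by field_simp]
          exact mul_le_mul_of_nonneg_left (hfM s)
            (by positivity)
    _ = M * ∫ u in Ioo (0:ℝ) 1, |g u| := by
        rw [cov lam hlam (fun u => |g u|), ← integral_const_mul, ← integral_const_mul]
        apply setIntegral_congr_fun measurableSet_Ioi
        intro s _
        field_simp

noncomputable def g0 : ℝ → ℝ := fun u => if Real.exp (-1) ≤ u then u⁻¹ else 0

lemma g0_meas : Measurable g0 := by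
  unfold g0
  exact Measurable.ite measurableSet_Ici measurable_inv measurable_const

lemma g0_bound : ∀ u ∈ Ioc (0:ℝ) 1, |g0 u| ≤ Real.exp 1 := by
  intro u hu
  unfold g0
  split_ifs with h
  · rw [abs_of_nonneg (inv_nonneg.mpr hu.1.le)]
    rw [show Real.exp 1 = (Real.exp (-1))⁻¹ by rw [← Real.exp_neg]; norm_num]
    exact inv_anti₀ (Real.exp_pos _) h
  · simpa using (Real.exp_pos 1).le

lemma g0_int : ∫ u in Ioo (0:ℝ) 1, g0 u = 1 := by
  have ha0 : (0:ℝ) < Real.exp (-1) := Real.exp_pos _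
  have ha1 : Real.exp (-1) < 1 := by
    rw [Real.exp_lt_one_iff]; norm_num
  have h1 : ∫ u in Ioo (0:ℝ) 1, g0 u
      = ∫ u in Ioo (0:ℝ) 1, (Ici (Real.exp (-1))).indicator (fun u => u⁻¹) u := by
    apply setIntegral_congr_fun measurableSet_Ioo
    intro u _
    rw [Set.indicator_apply]
    rfl
  rw [h1, setIntegral_indicator measurableSet_Ici,
    show Ioo (0:ℝ) 1 ∩ Ici (Real.exp (-1)) = Ico (Real.exp (-1)) 1 by
      ext u; simp only [mem_inter_iff, mem_Ioo, mem_Ici, mem_Ico]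
      constructor
      · rintro ⟨⟨_, h2⟩, h3⟩; exact ⟨h3, h2⟩
      · rintro ⟨h3, h2⟩; exact ⟨⟨lt_of_lt_of_le ha0 h3, h2⟩, h3⟩]
  rw [MeasureTheory.integral_Ico_eq_integral_Ioo, ← MeasureTheory.integral_Ioc_eq_integral_Ioo,
    ← intervalIntegral.integral_of_le ha1.le, integral_inv_of_pos ha0 one_pos]
  rw [show (1:ℝ) / Real.exp (-1) = Real.exp 1 by
    rw [one_div, ← Real.exp_neg]; norm_num]
  exact Real.log_exp 1

lemma ind_eq (f : ℝ → ℝ) (lam : ℝ) (hlam : 0 < lam) :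
    ∫ s in Ioi (0:ℝ), Real.exp (-lam * s) * g0 (Real.exp (-lam * s)) * f s
      = ∫ s in Ioc (0:ℝ) lam⁻¹, f s := by
  have h1 : ∫ s in Ioi (0:ℝ), Real.exp (-lam * s) * g0 (Real.exp (-lam * s)) * f s
      = ∫ s in Ioi (0:ℝ), (Ioc (0:ℝ) lam⁻¹).indicator f s := by
    apply setIntegral_congr_fun measurableSet_Ioi
    intro s hs
    have hiff : Real.exp (-1) ≤ Real.exp (-lam * s) ↔ s ≤ lam⁻¹ := by
      rw [Real.exp_le_exp]
      constructor
      · intro h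
        have h2 : lam * s ≤ 1 := by linarith
        calc s = lam⁻¹ * (lam * s) := by field_simp
          _ ≤ lam⁻¹ * 1 := by
              exact mul_le_mul_of_nonneg_left h2 (inv_pos.mpr hlam).le
          _ = lam⁻¹ := mul_one _
      · intro h
        have h2 : lam * s ≤ lam * lam⁻¹ := mul_le_mul_of_nonneg_left h hlam.le
        rw [mul_inv_cancel₀ hlam.ne'] at h2
        linarith
    show Real.exp (-lam * s) * g0 (Real.exp (-lam * s)) * f s = _
    unfold g0
    rw [Set.indicator_apply]
    by_cases h : s ≤ lam⁻¹
    · have hmem : s ∈ Ioc (0:ℝ) lam⁻¹ := ⟨hs, h⟩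
      rw [if_pos (hiff.mpr h), if_pos hmem, mul_inv_cancel₀ (Real.exp_pos _).ne', one_mul]
    · have hmem : s ∉ Ioc (0:ℝ) lam⁻¹ := fun hm => h hm.2
      rw [if_neg (fun hc => h (hiff.mp hc)), if_neg hmem, mul_zero, zero_mul]
  rw [h1, setIntegral_indicator measurableSet_Ioc,
    show Ioi (0:ℝ) ∩ Ioc (0:ℝ) lam⁻¹ = Ioc (0:ℝ) lam⁻¹ by
      apply inter_eq_self_of_subset_right; exact Ioc_subset_Ioi_self]

lemma mono_limit (f : ℝ → ℝ) (θ μ₀ c lam₀ : ℝ) (hlam₀ : 0 < lam₀)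
    (hF : ∀ lam ∈ Ioo (0:ℝ) lam₀, ∫ s in Ioi (0:ℝ), Real.exp (-lam * s) * f s
      = lam⁻¹ * (c * Real.exp (-θ * μ₀ * (Real.log (1 / lam))⁻¹))) (k : ℕ) :
    Tendsto (fun lam => lam * ∫ s in Ioi (0:ℝ),
        Real.exp (-lam * s) * (Real.exp (-lam * s))^k * f s)
      (𝓝[>] (0:ℝ)) (𝓝 (c / ((k:ℝ)+1))) := by
  have hK : (0:ℝ) < (k:ℝ) + 1 := by positivity
  -- the nice function
  have h3 : Tendsto (fun lam : ℝ => ((k:ℝ)+1) * lam) (𝓝[>] 0) (𝓝[>] 0) := by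
    apply tendsto_nhdsWithin_of_tendsto_nhds_of_eventually_within
    · have h0 : Tendsto (fun lam : ℝ => ((k:ℝ)+1) * lam) (𝓝 0) (𝓝 (((k:ℝ)+1) * 0)) :=
        (continuous_const.mul continuous_id).tendsto 0
      rw [mul_zero] at h0
      exact h0.mono_left nhdsWithin_le_nhds
    · filter_upwards [self_mem_nhdsWithin] with lam (hlam : 0 < lam)
      exact mul_pos hK hlam
  have h4 : Tendsto (fun lam : ℝ => 1 / (((k:ℝ)+1) * lam)) (𝓝[>] 0) atTop := by
    have := tendsto_inv_nhdsGT_zero.comp h3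
    simpa only [Function.comp_def, one_div] using this
  have h5 : Tendsto (fun lam : ℝ => (Real.log (1 / (((k:ℝ)+1) * lam)))⁻¹) (𝓝[>] 0) (𝓝 0) :=
    (Real.tendsto_log_atTop.comp h4).inv_tendsto_atTop
  have h6 : Tendsto (fun lam : ℝ =>
      ((k:ℝ)+1)⁻¹ * (c * Real.exp (-θ * μ₀ * (Real.log (1 / (((k:ℝ)+1) * lam)))⁻¹)))
      (𝓝[>] 0) (𝓝 (c / ((k:ℝ)+1))) := by
    have h7 : Tendsto (fun lam : ℝ => -θ * μ₀ * (Real.log (1 / (((k:ℝ)+1) * lam)))⁻¹)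
        (𝓝[>] 0) (𝓝 0) := by
      simpa using h5.const_mul (-θ * μ₀)
    have h8 := (Real.continuous_exp.tendsto 0).comp h7
    rw [Real.exp_zero] at h8
    have h9 := (h8.const_mul c).const_mul (((k:ℝ)+1)⁻¹)
    simpa [mul_one, div_eq_inv_mul] using h9
  refine h6.congr' ?_
  filter_upwards [Ioo_mem_nhdsGT_of_mem
    (show (0:ℝ) ∈ Ico (0:ℝ) (lam₀ / ((k:ℝ)+1)) from ⟨le_refl 0, by positivity⟩)]
    with lam hlam
  obtain ⟨hl0, hlu⟩ := hlam
  have hmem : ((k:ℝ)+1) * lam ∈ Ioo (0:ℝ) lam₀ := by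
    constructor
    · exact mul_pos hK hl0
    · have := (mul_lt_mul_iff_right₀ hK).mpr hlu
      rwa [mul_div_cancel₀ _ hK.ne'] at this
  have hintg : ∫ s in Ioi (0:ℝ), Real.exp (-lam * s) * (Real.exp (-lam * s))^k * f s
      = ∫ s in Ioi (0:ℝ), Real.exp (-(((k:ℝ)+1) * lam) * s) * f s := by
    apply setIntegral_congr_fun measurableSet_Ioi
    intro s _
    have : Real.exp (-lam * s) * (Real.exp (-lam * s))^k = Real.exp (-(((k:ℝ)+1) * lam) * s) := by
      rw [← Real.exp_nat_mul, ← Real.exp_add]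
      congr 1
      push_cast
      ring
    simp only [this]
  rw [hintg, hF _ hmem]
  field_simp

lemma poly_limit (f : ℝ → ℝ) (M : ℝ) (hfm : Measurable f) (hfnn : ∀ s, 0 ≤ f s)
    (hfM : ∀ s, f s ≤ M) (θ μ₀ c lam₀ : ℝ) (hlam₀ : 0 < lam₀)
    (hF : ∀ lam ∈ Ioo (0:ℝ) lam₀, ∫ s in Ioi (0:ℝ), Real.exp (-lam * s) * f s
      = lam⁻¹ * (c * Real.exp (-θ * μ₀ * (Real.log (1 / lam))⁻¹))) (p : ℝ[X]) :
    Tendsto (fun lam => lam * ∫ s in Ioi (0:ℝ),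
        Real.exp (-lam * s) * p.eval (Real.exp (-lam * s)) * f s)
      (𝓝[>] (0:ℝ)) (𝓝 (c * ∫ u in Ioo (0:ℝ) 1, p.eval u)) := by
  set n := p.natDegree + 1 with hn
  -- integral identity for each lam > 0
  have key : ∀ lam : ℝ, 0 < lam →
      lam * ∫ s in Ioi (0:ℝ), Real.exp (-lam * s) * p.eval (Real.exp (-lam * s)) * f s
        = ∑ k ∈ Finset.range n, p.coeff k * (lam * ∫ s in Ioi (0:ℝ),
            Real.exp (-lam * s) * (Real.exp (-lam * s))^k * f s) := by
    intro lam hlam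
    have hsplit : ∫ s in Ioi (0:ℝ), Real.exp (-lam * s) * p.eval (Real.exp (-lam * s)) * f s
        = ∑ k ∈ Finset.range n, ∫ s in Ioi (0:ℝ),
            p.coeff k * (Real.exp (-lam * s) * (Real.exp (-lam * s))^k * f s) := by
      rw [← integral_finset_sum]
      · apply setIntegral_congr_fun measurableSet_Ioi
        intro s _
        show Real.exp (-lam * s) * p.eval (Real.exp (-lam * s)) * f s
          = ∑ k ∈ Finset.range n, p.coeff k * (Real.exp (-lam * s) * (Real.exp (-lam * s))^k * f s)
        rw [Polynomial.eval_eq_sum_range, Finset.mul_sum, Finset.sum_mul]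
        exact Finset.sum_congr rfl fun k _ => by ring
      · intro k _
        exact (integ f M hfm hfnn hfM (fun u => u^k) ((continuous_pow k).measurable) 1
          (fun u hu => by
            rw [abs_pow]
            exact pow_le_one₀ (abs_nonneg u) (abs_le.mpr ⟨by linarith [hu.1.le], hu.2⟩))
          lam hlam).const_mul (p.coeff k)
    rw [hsplit, Finset.mul_sum]
    exact Finset.sum_congr rfl fun k _ => by
      rw [integral_const_mul]; ring
  -- the limit of the sum
  have hsum : Tendsto (fun lam => ∑ k ∈ Finset.range n, p.coeff k * (lam * ∫ s in Ioi (0:ℝ),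
        Real.exp (-lam * s) * (Real.exp (-lam * s))^k * f s))
      (𝓝[>] (0:ℝ)) (𝓝 (∑ k ∈ Finset.range n, p.coeff k * (c / ((k:ℝ)+1)))) := by
    apply tendsto_finset_sum
    intro k _
    exact (mono_limit f θ μ₀ c lam₀ hlam₀ hF k).const_mul (p.coeff k)
  -- identify the limit value
  have hval : ∑ k ∈ Finset.range n, p.coeff k * (c / ((k:ℝ)+1))
      = c * ∫ u in Ioo (0:ℝ) 1, p.eval u := by
    have h1 : ∫ u in Ioo (0:ℝ) 1, p.eval u = ∫ u in (0:ℝ)..1, p.eval u := by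
      rw [intervalIntegral.integral_of_le one_pos.le, MeasureTheory.integral_Ioc_eq_integral_Ioo]
    rw [h1]
    have h2 : ∫ u in (0:ℝ)..1, p.eval u
        = ∑ k ∈ Finset.range n, ∫ u in (0:ℝ)..1, p.coeff k * u^k := by
      rw [← intervalIntegral.integral_finset_sum]
      · apply intervalIntegral.integral_congr
        intro u _
        show p.eval u = ∑ k ∈ Finset.range n, p.coeff k * u^k
        rw [Polynomial.eval_eq_sum_range]
      · intro k _
        exact (continuous_const.mul (continuous_pow k)).intervalIntegrable 0 1
    rw [h2, Finset.mul_sum]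
    apply Finset.sum_congr rfl
    intro k _
    rw [intervalIntegral.integral_const_mul, integral_pow]
    rw [one_pow, zero_pow (Nat.succ_ne_zero k)]
    push_cast
    ring
  rw [← hval]
  refine hsum.congr' ?_
  filter_upwards [self_mem_nhdsWithin] with lam (hlam : 0 < lam)
  exact (key lam hlam).symm



lemma approx (δ : ℝ) (hδ : 0 < δ) : ∃ p : ℝ[X],
    (∫ u in Ioo (0:ℝ) 1, |p.eval u - g0 u|) ≤ δ := by
  set a : ℝ := Real.exp (-1) with ha
  have ha0 : 0 < a := Real.exp_pos _
  have ha1 : a < 1 := by rw [ha, Real.exp_lt_one_iff]; norm_num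
  have hainv : a⁻¹ = Real.exp 1 := by rw [ha, ← Real.exp_neg]; norm_num
  set η : ℝ := min (a/2) (δ/(16 * Real.exp 1)) with hη
  have hη0 : 0 < η := lt_min (by positivity) (by positivity)
  have hηa : η ≤ a/2 := min_le_left _ _
  have hηδ : η ≤ δ/(16 * Real.exp 1) := min_le_right _ _
  have haη : 0 < a - η := by linarith
  have hinv_bound : (a - η)⁻¹ ≤ 2 * Real.exp 1 := by
    rw [← hainv]
    rw [show (2:ℝ) * a⁻¹ = (a/2)⁻¹ by field_simp]
    exact inv_anti₀ (by linarith) (by linarith)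
  set δ₁ : ℝ := δ/4 with hδ₁
  have hδ₁0 : 0 < δ₁ := by positivity
  -- Step 1: polynomial q near u⁻¹ on [a-η, 1]
  have hcont : ContinuousOn (fun u : ℝ => u⁻¹) (Icc (a-η) 1) := by
    apply ContinuousOn.inv₀ continuousOn_id
    intro x hx
    have : 0 < x := lt_of_lt_of_le haη hx.1
    exact this.ne'
  obtain ⟨q, hq⟩ := exists_polynomial_near_of_continuousOn (a-η) 1 _ hcont δ₁ hδ₁0
  -- Step 2: ramp and G
  set R : ℝ → ℝ := fun u => min 1 (max 0 ((u - (a - η))/η)) with hR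
  have hRcont : Continuous R :=
    continuous_const.min (continuous_const.max ((continuous_id.sub continuous_const).div_const η))
  have hR0 : ∀ u, u ≤ a - η → R u = 0 := by
    intro u hu
    rw [hR]
    simp only
    rw [max_eq_left (by
      apply div_nonpos_of_nonpos_of_nonneg <;> linarith), min_eq_right (by norm_num)]
  have hR1 : ∀ u, a ≤ u → R u = 1 := by
    intro u hu
    rw [hR]
    simp only
    rw [min_eq_left]
    rw [le_max_iff]
    right
    rw [le_div_iff₀ hη0]
    linarith
  have hRb : ∀ u, 0 ≤ R u ∧ R u ≤ 1 := by
    intro u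
    constructor
    · exact le_min (by norm_num) (le_max_left _ _)
    · exact min_le_left _ _
  set G : ℝ → ℝ := fun u => q.eval u * R u with hG
  have hGcont : Continuous G := q.continuous.mul hRcont
  -- Step 3: polynomial p near G on [0,1]
  obtain ⟨p, hp⟩ := exists_polynomial_near_of_continuousOn 0 1 G hGcont.continuousOn δ₁ hδ₁0
  refine ⟨p, ?_⟩
  -- pointwise bound
  set C : ℝ := 4 * Real.exp 1 with hC
  have hCpos : 0 < C := by positivity
  have hptwise : ∀ u ∈ Ioo (0:ℝ) 1, |p.eval u - g0 u|
      ≤ 2 * δ₁ + (Ioc (a-η) a).indicator (fun _ => C) u := by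
    intro u hu
    have hu01 : u ∈ Icc (0:ℝ) 1 := ⟨hu.1.le, hu.2.le⟩
    have h1 : |p.eval u - G u| ≤ δ₁ := (hp u hu01).le
    have h2 : |G u - g0 u| ≤ δ₁ + (Ioc (a-η) a).indicator (fun _ => C) u := by
      by_cases hcase1 : u ≤ a - η
      · -- G = 0, g0 = 0
        have hg0 : g0 u = 0 := by
          unfold g0
          rw [if_neg]; push_neg; rw [← ha]; linarith
        rw [hG]
        simp only
        rw [hR0 u hcase1, mul_zero, hg0, sub_zero, abs_zero]
        have : (0:ℝ) ≤ (Ioc (a-η) a).indicator (fun _ => C) u :=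
          Set.indicator_nonneg (fun _ _ => hCpos.le) u
        linarith
      · push_neg at hcase1
        have huIcc : u ∈ Icc (a-η) 1 := ⟨hcase1.le, hu.2.le⟩
        have hqu : |q.eval u - u⁻¹| ≤ δ₁ := (hq u huIcc).le
        by_cases hcase2 : a ≤ u
        · -- R = 1, G = q.eval u, g0 = u⁻¹
          have hg0 : g0 u = u⁻¹ := by unfold g0; rw [if_pos]; rw [← ha]; exact hcase2
          rw [hG]
          simp only
          rw [hR1 u hcase2, mul_one, hg0]
          have : (0:ℝ) ≤ (Ioc (a-η) a).indicator (fun _ => C) u :=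
            Set.indicator_nonneg (fun _ _ => hCpos.le) u
          linarith
        · -- a-η < u < a : the indicator is 1
          push_neg at hcase2
          have hmem : u ∈ Ioc (a-η) a := ⟨hcase1, hcase2.le⟩
          rw [Set.indicator_of_mem hmem]
          have hg0 : g0 u = 0 := by unfold g0; rw [if_neg]; push_neg; rw [← ha]; exact hcase2
          have hq_abs : |q.eval u| ≤ δ₁ + u⁻¹ := by
            calc |q.eval u| = |(q.eval u - u⁻¹) + u⁻¹| := by ring_nf
              _ ≤ |q.eval u - u⁻¹| + |u⁻¹| := abs_add_le _ _
              _ ≤ δ₁ + u⁻¹ := by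
                  rw [abs_of_nonneg (inv_nonneg.mpr hu.1.le)]
                  linarith
          have huinv : u⁻¹ ≤ 2 * Real.exp 1 :=
            le_trans (inv_anti₀ haη hcase1.le) hinv_bound
          rw [hG]
          simp only
          rw [hg0, sub_zero, abs_mul]
          have hRabs : |R u| ≤ 1 := by
            rw [abs_of_nonneg (hRb u).1]; exact (hRb u).2
          calc |q.eval u| * |R u| ≤ (δ₁ + u⁻¹) * 1 :=
                mul_le_mul hq_abs hRabs (abs_nonneg _)
                  (by have := inv_nonneg.mpr hu.1.le; linarith)
            _ = δ₁ + u⁻¹ := mul_one _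
            _ ≤ δ₁ + C := by rw [hC]; linarith
    calc |p.eval u - g0 u| ≤ |p.eval u - G u| + |G u - g0 u| := by
          have := abs_add_le (p.eval u - G u) (G u - g0 u)
          simpa using this
      _ ≤ 2 * δ₁ + (Ioc (a-η) a).indicator (fun _ => C) u := by linarith
  -- integrate the bound
  have hLint : IntegrableOn (fun u => |p.eval u - g0 u|) (Ioo (0:ℝ) 1) := by
    obtain ⟨Kp, hKp⟩ := (isCompact_Icc (a := (0:ℝ)) (b := 1)).exists_bound_of_continuousOn
      p.continuous.continuousOn
    refine Integrable.mono' (g := fun _ => Kp + Real.exp 1)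
      ((integrableOn_const_iff).mpr (Or.inr (by rw [Real.volume_Ioo]; exact ENNReal.ofReal_lt_top)))
      ((p.continuous.measurable.sub g0_meas).abs).aestronglyMeasurable ?_
    filter_upwards [ae_restrict_mem measurableSet_Ioo] with u hu
    have h1 : |p.eval u| ≤ Kp := by
      have := hKp u ⟨hu.1.le, hu.2.le⟩
      simpa [Real.norm_eq_abs] using this
    have h2 : |g0 u| ≤ Real.exp 1 := g0_bound u ⟨hu.1, hu.2.le⟩
    rw [Real.norm_eq_abs, abs_abs]
    calc |p.eval u - g0 u| ≤ |p.eval u| + |g0 u| := abs_sub _ _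
      _ ≤ Kp + Real.exp 1 := add_le_add h1 h2
  have hIndInt : Integrable ((Ioc (a-η) a).indicator (fun _ => C))
      (volume.restrict (Ioo (0:ℝ) 1)) := by
    refine Integrable.indicator ?_ measurableSet_Ioc
    exact (integrableOn_const_iff).mpr (Or.inr (by rw [Real.volume_Ioo]; exact ENNReal.ofReal_lt_top))
  have hBint : IntegrableOn (fun u => 2*δ₁ + (Ioc (a-η) a).indicator (fun _ => C) u)
      (Ioo (0:ℝ) 1) := by
    refine Integrable.add ?_ hIndInt
    exact (integrableOn_const_iff).mpr (Or.inr (by rw [Real.volume_Ioo]; exact ENNReal.ofReal_lt_top))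
  have hvol : (volume (Ioo (0:ℝ) 1 ∩ Ioc (a-η) a)).toReal ≤ η := by
    have h1 : volume (Ioo (0:ℝ) 1 ∩ Ioc (a-η) a) ≤ volume (Ioc (a-η) a) :=
      measure_mono inter_subset_right
    rw [Real.volume_Ioc] at h1
    have h2 : (volume (Ioo (0:ℝ) 1 ∩ Ioc (a-η) a)).toReal
        ≤ (ENNReal.ofReal (a - (a-η))).toReal :=
      ENNReal.toReal_mono ENNReal.ofReal_ne_top h1
    rwa [ENNReal.toReal_ofReal (by linarith), show a - (a-η) = η by ring] at h2
  calc ∫ u in Ioo (0:ℝ) 1, |p.eval u - g0 u|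
      ≤ ∫ u in Ioo (0:ℝ) 1, (2*δ₁ + (Ioc (a-η) a).indicator (fun _ => C) u) :=
        setIntegral_mono_on hLint hBint measurableSet_Ioo hptwise
    _ = (∫ _u in Ioo (0:ℝ) 1, 2*δ₁)
        + ∫ u in Ioo (0:ℝ) 1, (Ioc (a-η) a).indicator (fun _ => C) u := by
        exact integral_add ((integrableOn_const_iff).mpr
          (Or.inr (by rw [Real.volume_Ioo]; exact ENNReal.ofReal_lt_top))) hIndInt
    _ ≤ 2*δ₁ + C * η := by
        have e1 : (∫ _u in Ioo (0:ℝ) 1, 2*δ₁) = 2*δ₁ := by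
          rw [setIntegral_const, Real.volume_real_Ioo, smul_eq_mul]
          norm_num
        have e2 : ∫ u in Ioo (0:ℝ) 1, (Ioc (a-η) a).indicator (fun _ => C) u
            = (volume (Ioo (0:ℝ) 1 ∩ Ioc (a-η) a)).toReal * C := by
          rw [setIntegral_indicator measurableSet_Ioc, setIntegral_const, smul_eq_mul, measureReal_def]
        rw [e1, e2]
        have := mul_le_mul_of_nonneg_right hvol hCpos.le
        nlinarith
    _ ≤ δ := by
        have hexp := Real.exp_pos 1
        have h4 : C * η ≤ δ/4 := by
          rw [hC]
          have : η ≤ δ/(16 * Real.exp 1) := hηδ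
          calc 4 * Real.exp 1 * η ≤ 4 * Real.exp 1 * (δ/(16 * Real.exp 1)) := by nlinarith
            _ = δ/4 := by field_simp; ring
        rw [hδ₁]
        linarith



theorem main_tendsto (f : ℝ → ℝ) (M : ℝ) (hfm : Measurable f) (hfnn : ∀ s, 0 ≤ f s)
    (hfM : ∀ s, f s ≤ M) (θ μ₀ c lam₀ : ℝ) (hc0 : 0 ≤ c) (hc1 : c ≤ 1) (hlam₀ : 0 < lam₀)
    (hF : ∀ lam ∈ Ioo (0:ℝ) lam₀, ∫ s in Ioi (0:ℝ), Real.exp (-lam * s) * f s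
      = lam⁻¹ * (c * Real.exp (-θ * μ₀ * (Real.log (1 / lam))⁻¹))) :
    Tendsto (fun lam => lam * ∫ s in Ioc (0:ℝ) lam⁻¹, f s) (𝓝[>] (0:ℝ)) (𝓝 c) := by
  have hM : 0 ≤ M := le_trans (hfnn 0) (hfM 0)
  rw [Metric.tendsto_nhds]
  intro δ hδ
  set δp : ℝ := δ / (2*(M+2)) with hδp
  have hδp0 : 0 < δp := by positivity
  obtain ⟨p, hpL1⟩ := approx δp hδp0
  -- bound for p on [0,1]
  obtain ⟨Kp, hKp⟩ := (isCompact_Icc (a := (0:ℝ)) (b := 1)).exists_bound_of_continuousOn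
    p.continuous.continuousOn
  have hKp' : ∀ u ∈ Ioc (0:ℝ) 1, |p.eval u| ≤ Kp := fun u hu => by
    have := hKp u ⟨hu.1.le, hu.2⟩
    simpa [Real.norm_eq_abs] using this
  -- the polynomial approximant tendsto
  have hpoly := poly_limit f M hfm hfnn hfM θ μ₀ c lam₀ hlam₀ hF p
  rw [Metric.tendsto_nhds] at hpoly
  -- |c * ∫ p - c| ≤ c * δp
  have hterm3 : |c * (∫ u in Ioo (0:ℝ) 1, p.eval u) - c| ≤ δp := by
    have hint_p : IntegrableOn (fun u => p.eval u) (Ioo (0:ℝ) 1) := by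
      refine Integrable.mono' (g := fun _ => Kp)
        ((integrableOn_const_iff).mpr (Or.inr (by rw [Real.volume_Ioo]; exact ENNReal.ofReal_lt_top)))
        p.continuous.measurable.aestronglyMeasurable ?_
      filter_upwards [ae_restrict_mem measurableSet_Ioo] with u hu
      rw [Real.norm_eq_abs]
      exact hKp' u ⟨hu.1, hu.2.le⟩
    have hint_g0 : IntegrableOn g0 (Ioo (0:ℝ) 1) := by
      refine Integrable.mono' (g := fun _ => Real.exp 1)
        ((integrableOn_const_iff).mpr (Or.inr (by rw [Real.volume_Ioo]; exact ENNReal.ofReal_lt_top)))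
        g0_meas.aestronglyMeasurable ?_
      filter_upwards [ae_restrict_mem measurableSet_Ioo] with u hu
      rw [Real.norm_eq_abs]
      exact g0_bound u ⟨hu.1, hu.2.le⟩
    have hdiff : |(∫ u in Ioo (0:ℝ) 1, p.eval u) - 1| ≤ δp := by
      have hkey : (∫ u in Ioo (0:ℝ) 1, p.eval u) - 1
          = ∫ u in Ioo (0:ℝ) 1, (p.eval u - g0 u) := by
        rw [integral_sub hint_p hint_g0, g0_int]
      rw [hkey]
      calc |∫ u in Ioo (0:ℝ) 1, (p.eval u - g0 u)|
          ≤ ∫ u in Ioo (0:ℝ) 1, |p.eval u - g0 u| := by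
            have := norm_integral_le_integral_norm (μ := volume.restrict (Ioo (0:ℝ) 1))
              (fun u => p.eval u - g0 u)
            simpa [Real.norm_eq_abs] using this
        _ ≤ δp := hpL1
    have hfactor : c * (∫ u in Ioo (0:ℝ) 1, p.eval u) - c
        = c * ((∫ u in Ioo (0:ℝ) 1, p.eval u) - 1) := by ring
    rw [hfactor, abs_mul, abs_of_nonneg hc0]
    calc c * |(∫ u in Ioo (0:ℝ) 1, p.eval u) - 1| ≤ 1 * δp :=
          mul_le_mul hc1 hdiff (abs_nonneg _) one_pos.le
      _ = δp := one_mul _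
  -- term 1 bound: |T g0 - T p| ≤ M * δp, for each lam > 0
  have hterm1 : ∀ lam : ℝ, 0 < lam →
      |lam * (∫ s in Ioc (0:ℝ) lam⁻¹, f s)
        - lam * ∫ s in Ioi (0:ℝ), Real.exp (-lam * s) * p.eval (Real.exp (-lam * s)) * f s|
        ≤ M * δp := by
    intro lam hlam
    have hint1 := integ f M hfm hfnn hfM g0 g0_meas (Real.exp 1) g0_bound lam hlam
    have hint2 := integ f M hfm hfnn hfM (fun u => p.eval u) p.continuous.measurable Kp
      hKp' lam hlam
    have heq : lam * (∫ s in Ioc (0:ℝ) lam⁻¹, f s)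
        - lam * ∫ s in Ioi (0:ℝ), Real.exp (-lam * s) * p.eval (Real.exp (-lam * s)) * f s
        = lam * ∫ s in Ioi (0:ℝ),
            Real.exp (-lam * s) * (g0 (Real.exp (-lam * s)) - p.eval (Real.exp (-lam * s))) * f s := by
      rw [← ind_eq f lam hlam, ← mul_sub, ← integral_sub hint1 hint2]
      congr 1
      apply setIntegral_congr_fun measurableSet_Ioi
      intro s _
      show _ = Real.exp (-lam * s) * (g0 (Real.exp (-lam * s)) - p.eval (Real.exp (-lam * s))) * f s
      ring
    rw [heq]
    have herrb := errb f M hfm hfnn hfM (fun u => g0 u - p.eval u)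
      (g0_meas.sub p.continuous.measurable) (Real.exp 1 + Kp)
      (fun u hu => by
        calc |g0 u - p.eval u| ≤ |g0 u| + |p.eval u| := abs_sub _ _
          _ ≤ Real.exp 1 + Kp := add_le_add (g0_bound u hu) (hKp' u hu)) lam hlam
    refine le_trans herrb ?_
    have : (∫ u in Ioo (0:ℝ) 1, |g0 u - p.eval u|) = ∫ u in Ioo (0:ℝ) 1, |p.eval u - g0 u| := by
      apply setIntegral_congr_fun measurableSet_Ioo
      intro u _
      exact abs_sub_comm _ _
    rw [this]
    exact mul_le_mul_of_nonneg_left hpL1 hM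
  -- combine
  have hhalf : 0 < δ/2 := by positivity
  filter_upwards [hpoly (δ/2) hhalf, self_mem_nhdsWithin] with lam hlam2 hlam0
  have hlam : (0:ℝ) < lam := hlam0
  rw [Real.dist_eq] at hlam2 ⊢
  have h1 := hterm1 lam hlam
  calc |lam * (∫ s in Ioc (0:ℝ) lam⁻¹, f s) - c|
      ≤ |lam * (∫ s in Ioc (0:ℝ) lam⁻¹, f s)
          - lam * ∫ s in Ioi (0:ℝ), Real.exp (-lam * s) * p.eval (Real.exp (-lam * s)) * f s|
        + |lam * (∫ s in Ioi (0:ℝ), Real.exp (-lam * s) * p.eval (Real.exp (-lam * s)) * f s)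
            - c * ∫ u in Ioo (0:ℝ) 1, p.eval u|
        + |c * (∫ u in Ioo (0:ℝ) 1, p.eval u) - c| := by
          have h3 := abs_add_three
            (lam * (∫ s in Ioc (0:ℝ) lam⁻¹, f s)
              - lam * ∫ s in Ioi (0:ℝ), Real.exp (-lam * s) * p.eval (Real.exp (-lam * s)) * f s)
            (lam * (∫ s in Ioi (0:ℝ), Real.exp (-lam * s) * p.eval (Real.exp (-lam * s)) * f s)
              - c * ∫ u in Ioo (0:ℝ) 1, p.eval u)
            (c * (∫ u in Ioo (0:ℝ) 1, p.eval u) - c)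
          rw [show (lam * (∫ s in Ioc (0:ℝ) lam⁻¹, f s)
              - lam * ∫ s in Ioi (0:ℝ), Real.exp (-lam * s) * p.eval (Real.exp (-lam * s)) * f s)
            + (lam * (∫ s in Ioi (0:ℝ), Real.exp (-lam * s) * p.eval (Real.exp (-lam * s)) * f s)
              - c * ∫ u in Ioo (0:ℝ) 1, p.eval u)
            + (c * (∫ u in Ioo (0:ℝ) 1, p.eval u) - c)
            = lam * (∫ s in Ioc (0:ℝ) lam⁻¹, f s) - c by ring] at h3
          exact h3
    _ < δ := by
        have hdd : δp * (2*(M+2)) = δ := by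
          rw [hδp]; field_simp
        have : M * δp + δp ≤ δ/2 := by nlinarith [hδp0, hdd]
        linarith

/-- Karamata-type conclusion for class (C2): if (ℒf)(λ) = λ^{-1}(1-ε)exp(-θμ₀(log(1/λ))^{-1})
for small λ > 0, then (1/t)∫₀^t f ~ (1-ε)exp(-θμ₀(log t)^{-1}) as t → ∞;
in particular the Cesàro mean tends to 1-ε. -/
theorem cesaro_mean_asymptotics_C2
    (f : ℝ → ℝ) (θ μ₀ ε : ℝ) (hθ : 0 < θ) (hμ : 0 < μ₀) (hε : ε ∈ Ioo (0:ℝ) 1)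
    (hfm : Measurable f) (hfnn : ∀ s, 0 ≤ f s) (hfb : ∃ M : ℝ, ∀ s, f s ≤ M)
    (hLT : ∃ lam₀ > (0:ℝ), ∀ lam ∈ Ioo (0:ℝ) lam₀,
      ∫ s in Ioi (0:ℝ), Real.exp (-lam * s) * f s
        = lam⁻¹ * ((1 - ε) * Real.exp (-θ * μ₀ * (Real.log (1 / lam))⁻¹))) :
    Tendsto (fun t : ℝ =>
        ((1 / t) * ∫ s in (0:ℝ)..t, f s)
          / ((1 - ε) * Real.exp (-θ * μ₀ * (Real.log t)⁻¹)))
      atTop (nhds 1)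
    ∧ Tendsto (fun t : ℝ => (1 / t) * ∫ s in (0:ℝ)..t, f s) atTop (nhds (1 - ε)) := by
  obtain ⟨M, hfM⟩ := hfb
  obtain ⟨lam₀, hlam₀, hLT'⟩ := hLT
  have hc0 : (0:ℝ) ≤ 1 - ε := by linarith [hε.2]
  have hcpos : (0:ℝ) < 1 - ε := by linarith [hε.2]
  have hc1 : (1:ℝ) - ε ≤ 1 := by linarith [hε.1]
  have hmain := main_tendsto f M hfm hfnn hfM θ μ₀ (1-ε) lam₀ hc0 hc1 hlam₀ hLT'
  have hinv : Tendsto (fun t : ℝ => t⁻¹) atTop (𝓝[>] (0:ℝ)) := by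
    apply tendsto_nhdsWithin_of_tendsto_nhds_of_eventually_within
    · exact tendsto_inv_atTop_zero
    · filter_upwards [eventually_gt_atTop (0:ℝ)] with t ht
      exact inv_pos.mpr ht
  have h2' := hmain.comp hinv
  have h2 : Tendsto (fun t : ℝ => (1/t) * ∫ s in (0:ℝ)..t, f s) atTop (𝓝 (1-ε)) := by
    refine h2'.congr' ?_
    filter_upwards [eventually_gt_atTop (0:ℝ)] with t ht
    show t⁻¹ * ∫ s in Ioc (0:ℝ) (t⁻¹)⁻¹, f s = (1/t) * ∫ s in (0:ℝ)..t, f s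
    rw [inv_inv, one_div, intervalIntegral.integral_of_le ht.le]
  have hden : Tendsto (fun t : ℝ => (1-ε) * Real.exp (-θ * μ₀ * (Real.log t)⁻¹))
      atTop (𝓝 (1-ε)) := by
    have h5 : Tendsto (fun t : ℝ => (Real.log t)⁻¹) atTop (𝓝 0) :=
      Real.tendsto_log_atTop.inv_tendsto_atTop
    have h7 : Tendsto (fun t : ℝ => -θ * μ₀ * (Real.log t)⁻¹) atTop (𝓝 0) := by
      simpa using h5.const_mul (-θ * μ₀)
    have h8 := (Real.continuous_exp.tendsto 0).comp h7
    rw [Real.exp_zero] at h8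
    have h9 := h8.const_mul (1-ε)
    simpa [mul_one] using h9
  constructor
  · have h1 := h2.div hden hcpos.ne'
    rwa [div_self hcpos.ne'] at h1
  · exact h2
end
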